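/- arXiv:2410.02407 — 7 statements merged into one kernel-verified Lean document; each statement's English description precedes it below -/
import Mathlib

section
/- (Lemma 4, shift part.) For all j, k, ℓ ∈ ZMod d, conjugation of the collective operators by the N-fold tensor power of the shift matrix cyclically lowers indices: X̄ᴴ S~^(j,k) X̄ = S~^(j−1,k−1), X̄ᴴ A~^(j,k) X̄ = A~^(j−1,k−1), and X̄ᴴ D~^(ℓ) X̄ = D~^(ℓ−1), where X̄ᴴ is the conjugate transpose of X̄. -/
open Matrix Complex Finset

/-- ζ = exp(2πi/d). -/
noncomputable def zeta (d : ℕ) : ℂ := Complex.exp (2 * Real.pi * Complex.I / d)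

/-- The shift matrix X = Σ_p |p+1⟩⟨p|. -/
noncomputable def shiftX (d : ℕ) [NeZero d] : Matrix (ZMod d) (ZMod d) ℂ :=
  ∑ p : ZMod d, Matrix.single (p + 1) p 1

/-- The clock matrix Z = Σ_p ζ^p |p⟩⟨p|. -/
noncomputable def clockZ (d : ℕ) [NeZero d] : Matrix (ZMod d) (ZMod d) ℂ :=
  ∑ p : ZMod d, Matrix.single p p (zeta d ^ p.val)

/-- S^(j,k) = |j⟩⟨k| + |k⟩⟨j|. -/
noncomputable def Smat (d : ℕ) (j k : ZMod d) : Matrix (ZMod d) (ZMod d) ℂ :=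
  Matrix.single j k 1 + Matrix.single k j 1

/-- A^(j,k) = −i|j⟩⟨k| + i|k⟩⟨j|. -/
noncomputable def Amat (d : ℕ) (j k : ZMod d) : Matrix (ZMod d) (ZMod d) ℂ :=
  (-Complex.I) • Matrix.single j k 1 + Complex.I • Matrix.single k j 1

/-- D^(ℓ) = |ℓ⟩⟨ℓ| − |ℓ+1⟩⟨ℓ+1|. -/
noncomputable def Dmat (d : ℕ) (ℓ : ZMod d) : Matrix (ZMod d) (ZMod d) ℂ :=
  Matrix.single ℓ ℓ 1 - Matrix.single (ℓ + 1) (ℓ + 1) 1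

/-- M acting at site i of an N-qudit system. -/
noncomputable def site (d N : ℕ) [NeZero d] (M : Matrix (ZMod d) (ZMod d) ℂ) (i : Fin N) :
    Matrix (Fin N → ZMod d) (Fin N → ZMod d) ℂ :=
  Matrix.of fun f g =>
    M (f i) (g i) * ∏ j ∈ Finset.univ.erase i, (if f j = g j then (1 : ℂ) else 0)

/-- The collective operator M~ = Σ_i M_[i]. -/
noncomputable def coll (d N : ℕ) [NeZero d] (M : Matrix (ZMod d) (ZMod d) ℂ) :
    Matrix (Fin N → ZMod d) (Fin N → ZMod d) ℂ :=
  ∑ i : Fin N, site d N M i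

/-- The N-fold tensor power of a d×d matrix. -/
noncomputable def tpow (d N : ℕ) [NeZero d] (M : Matrix (ZMod d) (ZMod d) ℂ) :
    Matrix (Fin N → ZMod d) (Fin N → ZMod d) ℂ :=
  Matrix.of fun f g => ∏ i : Fin N, M (f i) (g i)

/-- Inner product of N-qudit vectors, conjugate-linear in the first argument. -/
noncomputable def qinner (d N : ℕ) [NeZero d] (v w : (Fin N → ZMod d) → ℂ) : ℂ :=
  ∑ f : Fin N → ZMod d, star (v f) * w f

/-- A content u is admissible if all entries are nonnegative and they sum to N. -/
def admissible (d N : ℕ) [NeZero d] (u : ZMod d → ℤ) : Prop :=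
  (∀ k, 0 ≤ u k) ∧ ∑ k : ZMod d, u k = (N : ℤ)

/-- The Dicke vector |S_u⟩: sum of standard basis vectors over all f with |f⁻¹{k}| = u_k. -/
noncomputable def dicke (d N : ℕ) [NeZero d] (u : ZMod d → ℤ) : (Fin N → ZMod d) → ℂ :=
  fun f =>
    if ∀ k : ZMod d, ((Finset.univ.filter fun i => f i = k).card : ℤ) = u k then 1 else 0

/-- The weight Σ_{m=0}^{d−1} m·u_m of a content. -/
def cweight (d : ℕ) (u : ZMod d → ℤ) : ℤ :=
  ∑ m ∈ Finset.range d, (m : ℤ) * u ((m : ℕ) : ZMod d)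

/-- The code word |0̄⟩ determined by coefficients α. -/
noncomputable def codeZero (d N : ℕ) [NeZero d] (α : (ZMod d → ℤ) →₀ ℂ) :
    (Fin N → ZMod d) → ℂ :=
  α.sum fun u c => c • dicke d N u

/-- The code word |k̄⟩ = X̄^k |0̄⟩. -/
noncomputable def codeword (d N : ℕ) [NeZero d] (α : (ZMod d → ℤ) →₀ ℂ) (k : ZMod d) :
    (Fin N → ZMod d) → ℂ :=
  (tpow d N (shiftX d)) ^ k.val *ᵥ codeZero d N α

/-- Sparseness of the code determined by α. -/
def sparse (d : ℕ) [NeZero d] (α : (ZMod d → ℤ) →₀ ℂ) : Prop :=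
  ∀ u ∈ α.support, ∀ u' ∈ α.support, ∀ δ : ZMod d,
    (u, δ) ≠ (u', (0 : ZMod d)) → 4 < ∑ ξ : ZMod d, |u ξ - u' (ξ + δ)|

/-! X̄ is the permutation matrix of the pointwise shift `f ↦ f - 1`, so conjugating by it
reindexes a matrix by `f ↦ f + 1`. Reindexing commutes with forming collective operators, and
reindexing `|j⟩⟨k|` by `· + 1` gives `|j - 1⟩⟨k - 1|`. -/

lemma shiftX_eq_permMatrix (d : ℕ) [NeZero d] :
    shiftX d = Equiv.Perm.permMatrix ℂ (Equiv.subRight (1 : ZMod d)) := by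
  ext a b
  simp only [shiftX, Matrix.sum_apply, Matrix.single_apply, and_comm (a := _ + 1 = a), ite_and]
  simp [sub_eq_iff_eq_add, eq_comm (a := a)]

lemma tpow_permMatrix (d N : ℕ) [NeZero d] (σ : Equiv.Perm (ZMod d)) :
    tpow d N (σ.permMatrix ℂ) =
      Equiv.Perm.permMatrix ℂ (Equiv.piCongrRight fun _ : Fin N => σ) := by
  ext f g
  simp [tpow, Finset.prod_boole, funext_iff]

lemma Matrix.conjTranspose_permMatrix_mul_mul_permMatrix {n R : Type*} [DecidableEq n]
    [Fintype n] [NonAssocSemiring R] [StarRing R] (σ : Equiv.Perm n) (B : Matrix n n R) :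
    (σ.permMatrix R)ᴴ * B * σ.permMatrix R = B.submatrix σ.symm σ.symm := by
  rw [conjTranspose_permMatrix, PEquiv.toMatrix_toPEquiv_mul, PEquiv.mul_toMatrix_toPEquiv]
  rfl

lemma coll_submatrix_piCongrRight (d N : ℕ) [NeZero d] (σ : Equiv.Perm (ZMod d))
    (M : Matrix (ZMod d) (ZMod d) ℂ) :
    (coll d N M).submatrix (Equiv.piCongrRight fun _ => σ) (Equiv.piCongrRight fun _ => σ) =
      coll d N (M.submatrix σ σ) := by
  ext f g
  simp [coll, site, Matrix.sum_apply]

lemma Smat_submatrix (d : ℕ) (σ : Equiv.Perm (ZMod d)) (j k : ZMod d) :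
    (Smat d j k).submatrix σ σ = Smat d (σ.symm j) (σ.symm k) := by
  simp only [Smat, submatrix_add, Pi.add_apply, submatrix_single_equiv]

lemma Amat_submatrix (d : ℕ) (σ : Equiv.Perm (ZMod d)) (j k : ZMod d) :
    (Amat d j k).submatrix σ σ = Amat d (σ.symm j) (σ.symm k) := by
  simp only [Amat, submatrix_add, submatrix_smul, Pi.add_apply, Pi.smul_apply,
    submatrix_single_equiv]

lemma Dmat_submatrix_addRight (d : ℕ) (a ℓ : ZMod d) :
    (Dmat d ℓ).submatrix (Equiv.addRight a) (Equiv.addRight a) = Dmat d (ℓ - a) := by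
  rw [Dmat, submatrix_sub, Pi.sub_apply, Pi.sub_apply, submatrix_single_equiv,
    submatrix_single_equiv]
  simp [Dmat, ← sub_eq_add_neg, sub_add_eq_add_sub]

lemma conjTranspose_tpow_shiftX_mul_coll_mul (d N : ℕ) [NeZero d]
    (M : Matrix (ZMod d) (ZMod d) ℂ) :
    (tpow d N (shiftX d))ᴴ * coll d N M * tpow d N (shiftX d) =
      coll d N (M.submatrix (Equiv.addRight 1) (Equiv.addRight 1)) := by
  rw [shiftX_eq_permMatrix, tpow_permMatrix, conjTranspose_permMatrix_mul_mul_permMatrix]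
  -- `(piCongrRight fun _ => subRight 1).symm` unfolds to `piCongrRight fun _ => addRight 1`
  exact coll_submatrix_piCongrRight d N (Equiv.addRight 1) M

theorem stmt2_general (d N : ℕ) [NeZero d] (j k ℓ : ZMod d) :
    (tpow d N (shiftX d))ᴴ * coll d N (Smat d j k) * tpow d N (shiftX d) =
      coll d N (Smat d (j - 1) (k - 1)) ∧
    (tpow d N (shiftX d))ᴴ * coll d N (Amat d j k) * tpow d N (shiftX d) =
      coll d N (Amat d (j - 1) (k - 1)) ∧
    (tpow d N (shiftX d))ᴴ * coll d N (Dmat d ℓ) * tpow d N (shiftX d) =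
      coll d N (Dmat d (ℓ - 1)) := by
  simp only [conjTranspose_tpow_shiftX_mul_coll_mul, Dmat_submatrix_addRight, Smat_submatrix,
    Amat_submatrix, Equiv.addRight_symm]
  simp [sub_eq_add_neg]

/-- Lemma 4, shift part. -/
theorem stmt2 (d N : ℕ) [NeZero d] (hd : 2 ≤ d) (hN : 1 ≤ N) (j k ℓ : ZMod d) :
    (tpow d N (shiftX d))ᴴ * coll d N (Smat d j k) * tpow d N (shiftX d) =
      coll d N (Smat d (j - 1) (k - 1)) ∧
    (tpow d N (shiftX d))ᴴ * coll d N (Amat d j k) * tpow d N (shiftX d) =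
      coll d N (Amat d (j - 1) (k - 1)) ∧
    (tpow d N (shiftX d))ᴴ * coll d N (Dmat d ℓ) * tpow d N (shiftX d) =
      coll d N (Dmat d (ℓ - 1)) :=
  stmt2_general d N j k ℓ
end

section
/- (Lemma 4, clock part.) For all j, k ∈ ZMod d, conjugation of the collective operator S~^(j,k) by the N-fold tensor power of the clock matrix satisfies Z̄ᴴ S~^(j,k) Z̄ = Re(ζ^{k−j})·S~^(j,k) − Im(ζ^{k−j})·A~^(j,k), where Z̄ᴴ is the conjugate transpose of Z̄ and the exponent k−j is taken in ZMod d. -/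
open Matrix Complex Finset

/-! Z̄ is diagonal with unimodular entries, so conjugating M_[i] by Z̄ gives (Zᴴ M Z)_[i]: the
phases of the sites other than i cancel because M_[i] acts as the identity there. Since
a ↦ ζ^(a.val) is the standard additive character of ZMod d, conjugating S^(j,k) by Z gives
ζ^(k-j)|j⟩⟨k| + conj(ζ^(k-j))|k⟩⟨j|, whose real and imaginary parts are S^(j,k) and -A^(j,k). -/

lemma zeta_pow_val (d : ℕ) [NeZero d] (a : ZMod d) : zeta d ^ a.val = ZMod.stdAddChar a := by
  rw [zeta, ← Complex.exp_nat_mul, ZMod.stdAddChar_apply, ZMod.toCircle_apply]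
  ring_nf

lemma AddChar.star_mul_self {G : Type*} [AddCommGroup G] [Finite G] (ψ : AddChar G ℂ) (p : G) :
    star (ψ p) * ψ p = 1 := by
  rw [star_def, ← AddChar.map_neg_eq_conj, ← AddChar.map_add_eq_mul, neg_add_cancel,
    AddChar.map_zero_eq_one]

lemma clockZ_eq_diagonal (d : ℕ) [NeZero d] :
    clockZ d = diagonal ZMod.stdAddChar := by
  simp only [clockZ, zeta_pow_val, sum_single_eq_diagonal]

lemma tpow_diagonal (d N : ℕ) [NeZero d] (u : ZMod d → ℂ) :
    tpow d N (diagonal u) = diagonal fun f => ∏ i, u (f i) := by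
  ext f g
  simp only [tpow, of_apply, diagonal_apply, Fintype.prod_ite_zero, funext_iff]
  congr

lemma star_prod_mul_prod_of_eqOn_erase {ι α : Type*} [Fintype ι] [DecidableEq ι] {u : α → ℂ}
    (hu : ∀ p, star (u p) * u p = 1) {f g : ι → α} {i : ι}
    (hfg : ∀ l ∈ univ.erase i, f l = g l) :
    star (∏ l, u (f l)) * ∏ l, u (g l) = star (u (f i)) * u (g i) := by
  rw [star_prod, ← prod_mul_distrib, ← mul_prod_erase univ _ (mem_univ i),
    prod_eq_one fun l hl => by rw [hfg l hl, hu], mul_one]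

lemma tpow_diagonal_conj_site (d N : ℕ) [NeZero d] {u : ZMod d → ℂ}
    (hu : ∀ p, star (u p) * u p = 1) (M : Matrix (ZMod d) (ZMod d) ℂ) (i : Fin N) :
    (tpow d N (diagonal u))ᴴ * site d N M i * tpow d N (diagonal u) =
      site d N ((diagonal u)ᴴ * M * diagonal u) i := by
  ext f g
  simp only [tpow_diagonal, diagonal_conjTranspose, mul_diagonal, diagonal_mul, site, of_apply,
    Pi.star_apply, prod_boole]
  split_ifs with hfg
  · linear_combination M (f i) (g i) * star_prod_mul_prod_of_eqOn_erase hu hfg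
  · ring

lemma coll_sub (d N : ℕ) [NeZero d] (M M' : Matrix (ZMod d) (ZMod d) ℂ) :
    coll d N (M - M') = coll d N M - coll d N M' := by
  simp only [coll, ← sum_sub_distrib]
  refine sum_congr rfl fun i _ => ?_
  ext f g
  simp only [site, of_apply, Matrix.sub_apply, sub_mul]

lemma coll_smul (d N : ℕ) [NeZero d] (c : ℂ) (M : Matrix (ZMod d) (ZMod d) ℂ) :
    coll d N (c • M) = c • coll d N M := by
  simp only [coll, smul_sum]
  refine sum_congr rfl fun i _ => ?_
  ext f g
  simp only [site, of_apply, Matrix.smul_apply, smul_eq_mul, mul_assoc]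

lemma tpow_diagonal_conj_coll (d N : ℕ) [NeZero d] {u : ZMod d → ℂ}
    (hu : ∀ p, star (u p) * u p = 1) (M : Matrix (ZMod d) (ZMod d) ℂ) :
    (tpow d N (diagonal u))ᴴ * coll d N M * tpow d N (diagonal u) =
      coll d N ((diagonal u)ᴴ * M * diagonal u) := by
  simp only [coll, mul_sum, sum_mul, tpow_diagonal_conj_site d N hu]

lemma diagonal_conj_single {n : Type*} [Fintype n] [DecidableEq n] (u : n → ℂ) (j k : n) (c : ℂ) :
    (diagonal u)ᴴ * single j k c * diagonal u = single j k (star (u j) * c * u k) := by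
  ext a b
  simp only [diagonal_conjTranspose, mul_diagonal, diagonal_mul, single_apply, Pi.star_apply]
  split_ifs with h
  · rw [h.1, h.2]
  · simp

lemma single_add_single_conj_eq (d : ℕ) (j k : ZMod d) (w : ℂ) :
    single j k w + single k j (starRingEnd ℂ w) =
      (w.re : ℂ) • Smat d j k - (w.im : ℂ) • Amat d j k := by
  conv_lhs => rw [← re_add_im w, map_add, map_mul, conj_ofReal, conj_ofReal, conj_I]
  simp only [Smat, Amat, smul_add, smul_single, smul_eq_mul]
  rw [sub_eq_add_neg, neg_add, single_neg, single_neg, add_add_add_comm, ← single_add,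
    ← single_add]
  congr 2 <;> ring

lemma diagonal_addChar_conj_Smat (d : ℕ) [NeZero d] (ψ : AddChar (ZMod d) ℂ) (j k : ZMod d) :
    (diagonal ψ)ᴴ * Smat d j k * diagonal ψ =
      single j k (ψ (k - j)) + single k j (starRingEnd ℂ (ψ (k - j))) := by
  simp only [Smat, add_mul, mul_add, diagonal_conj_single, ← AddChar.map_neg_eq_conj, neg_sub,
    star_def, mul_one, ← AddChar.map_add_eq_mul, neg_add_eq_sub]

theorem stmt3_general (d N : ℕ) [NeZero d] (j k : ZMod d) :
    (tpow d N (clockZ d))ᴴ * coll d N (Smat d j k) * tpow d N (clockZ d) =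
      (((zeta d ^ (k - j).val).re : ℂ)) • coll d N (Smat d j k) -
      (((zeta d ^ (k - j).val).im : ℂ)) • coll d N (Amat d j k) := by
  rw [clockZ_eq_diagonal, tpow_diagonal_conj_coll d N ZMod.stdAddChar.star_mul_self,
    diagonal_addChar_conj_Smat, single_add_single_conj_eq, coll_sub, coll_smul, coll_smul,
    zeta_pow_val]

/-- Lemma 4, clock part. -/
theorem stmt3 (d N : ℕ) [NeZero d] (hd : 2 ≤ d) (hN : 1 ≤ N) (j k : ZMod d) :
    (tpow d N (clockZ d))ᴴ * coll d N (Smat d j k) * tpow d N (clockZ d) =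
      (((zeta d ^ (k - j).val).re : ℂ)) • coll d N (Smat d j k) -
      (((zeta d ^ (k - j).val).im : ℂ)) • coll d N (Amat d j k) :=
  stmt3_general d N j k
end

section
/- (Lemma S2, symmetric part.) Let u : ZMod d → ℤ be an admissible content and let p ≠ q in ZMod d. Then S~^(p,q) |S_u⟩ = (u_p + 1)·|S_{u + e_p − e_q}⟩ + (u_q + 1)·|S_{u − e_p + e_q}⟩, where the integer coefficients are cast to ℂ. -/
open Matrix Complex Finset

/-!
Only the factor at site `i` of `M_[i]` acts, so `(M~ v)(g) = Σ_i Σ_a M(g_i, a) v(g[i ↦ a])`.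
For `M = |a⟩⟨b|` with `a ≠ b`, the term at `i` survives only when `g_i = a`, and resetting that
site to `b` changes the content of `g` by `e_b − e_a`; so `|a⟩⟨b|~ |S_u⟩` is supported on strings
of content `u + e_a − e_b`, each counted once per site carrying `a`, i.e. `u_a + 1` times.
The claim follows since `S^(p,q) = |p⟩⟨q| + |q⟩⟨p|` and `M ↦ M~` is additive.
-/

section
variable {d N : ℕ} [NeZero d]

lemma site_mulVec_apply (M : Matrix (ZMod d) (ZMod d) ℂ) (i : Fin N)
    (v : (Fin N → ZMod d) → ℂ) (g : Fin N → ZMod d) :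
    (site d N M i *ᵥ v) g = ∑ a : ZMod d, M (g i) a * v (Function.update g i a) := by
  have agrees_off_site (f : Fin N → ZMod d) :
      (∏ j ∈ univ.erase i, (if g j = f j then (1 : ℂ) else 0)) =
        ∑ a : ZMod d, if f = Function.update g i a then 1 else 0 := by
    simp only [prod_boole, eq_comm (a := f), Function.update_eq_iff, ite_and, sum_ite_eq',
      mem_univ, if_true, mem_erase, ne_eq, and_true]
  simp only [site, mulVec, dotProduct, of_apply, agrees_off_site, mul_sum, sum_mul, mul_ite,
    ite_mul, mul_one, mul_zero, zero_mul]
  rw [sum_comm]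
  refine sum_congr rfl fun a _ => ?_
  simp [sum_ite_eq']

lemma coll_mulVec_apply (M : Matrix (ZMod d) (ZMod d) ℂ) (v : (Fin N → ZMod d) → ℂ)
    (g : Fin N → ZMod d) :
    (coll d N M *ᵥ v) g = ∑ i, ∑ a : ZMod d, M (g i) a * v (Function.update g i a) := by
  simp only [coll, sum_mulVec, Finset.sum_apply, site_mulVec_apply]

lemma coll_add (M M' : Matrix (ZMod d) (ZMod d) ℂ) :
    coll d N (M + M') = coll d N M + coll d N M' := by
  simp only [coll, ← sum_add_distrib]
  refine sum_congr rfl fun i _ => ?_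
  ext f g
  simp [site, add_mul]

omit [NeZero d] in
lemma card_filter_update_eq (g : Fin N → ZMod d) (i : Fin N) (a k : ZMod d) :
    ((univ.filter fun j => Function.update g i a j = k).card : ℤ) =
      (univ.filter fun j => g j = k).card + (if a = k then 1 else 0) -
        (if g i = k then 1 else 0) := by
  simp only [card_filter, Nat.cast_sum, Nat.cast_ite, Nat.cast_one, Nat.cast_zero]
  rw [← add_sum_erase _ _ (mem_univ i), ← add_sum_erase _ _ (mem_univ i),
    sum_congr rfl fun j hj => by rw [Function.update_of_ne (mem_erase.1 hj).1],
    Function.update_self]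
  ring

lemma dicke_update {u : ZMod d → ℤ} {g : Fin N → ZMod d} {i : Fin N} {a : ZMod d}
    (hg : g i = a) (b : ZMod d) :
    dicke d N u (Function.update g i b) = dicke d N (u + Pi.single a 1 - Pi.single b 1) g := by
  refine if_congr (forall_congr' fun k => ?_) rfl rfl
  rw [card_filter_update_eq, hg]
  simp only [Pi.sub_apply, Pi.add_apply, Pi.single_apply]
  by_cases hak : a = k <;> by_cases hbk : b = k <;> simp [hak, hbk, eq_comm] <;> omega

lemma card_filter_mul_dicke (v : ZMod d → ℤ) (g : Fin N → ZMod d) (a : ZMod d) :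
    ((univ.filter fun i => g i = a).card : ℂ) * dicke d N v g = (v a : ℂ) * dicke d N v g := by
  unfold dicke
  split_ifs with h
  · exact_mod_cast congrArg (fun n : ℤ => (n : ℂ) * 1) (h a)
  · simp

lemma coll_single_mulVec_dicke (u : ZMod d → ℤ) {a b : ZMod d} (hab : a ≠ b) :
    coll d N (Matrix.single a b 1) *ᵥ dicke d N u =
      ((u a + 1 : ℤ) : ℂ) • dicke d N (u + Pi.single a 1 - Pi.single b 1) := by
  set v := u + Pi.single a 1 - Pi.single b 1
  funext g
  have site_term (i : Fin N) :
      ∑ c : ZMod d, Matrix.single a b (1 : ℂ) (g i) c * dicke d N u (Function.update g i c) =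
        if g i = a then dicke d N v g else 0 := by
    by_cases h : g i = a
    · simp only [Matrix.single_apply, h, true_and, ite_mul, one_mul, zero_mul, sum_ite_eq,
        mem_univ, if_true]
      exact dicke_update h b
    · simp [h, Ne.symm h]
  have hva : v a = u a + 1 := by simp [v, hab]
  rw [coll_mulVec_apply, sum_congr rfl fun i _ => site_term i, sum_ite, sum_const,
    sum_const_zero, add_zero, nsmul_eq_mul, card_filter_mul_dicke, hva]
  rfl

end

theorem stmt5_general (d N : ℕ) [NeZero d]
    (u : ZMod d → ℤ) (p q : ZMod d) (hpq : p ≠ q) :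
    coll d N (Smat d p q) *ᵥ dicke d N u =
      ((u p + 1 : ℤ) : ℂ) • dicke d N (u + Pi.single p 1 - Pi.single q 1) +
      ((u q + 1 : ℤ) : ℂ) • dicke d N (u - Pi.single p 1 + Pi.single q 1) := by
  rw [Smat, coll_add, add_mulVec, coll_single_mulVec_dicke u hpq,
    coll_single_mulVec_dicke u hpq.symm, add_sub_right_comm u (Pi.single q 1)]

/-- Lemma S2, symmetric part. -/
theorem stmt5 (d N : ℕ) [NeZero d] (hd : 2 ≤ d) (hN : 1 ≤ N)
    (u : ZMod d → ℤ) (hu : admissible d N u) (p q : ZMod d) (hpq : p ≠ q) :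
    coll d N (Smat d p q) *ᵥ dicke d N u =
      ((u p + 1 : ℤ) : ℂ) • dicke d N (u + Pi.single p 1 - Pi.single q 1) +
      ((u q + 1 : ℤ) : ℂ) • dicke d N (u - Pi.single p 1 + Pi.single q 1) :=
  stmt5_general d N u p q hpq
end

section
/- (Lemma S2, diagonal part.) Let u : ZMod d → ℤ be an admissible content and let ℓ ∈ ZMod d. Then D~^(ℓ) |S_u⟩ = (u_ℓ − u_{ℓ+1})·|S_u⟩, where the integer coefficient is cast to ℂ. -/
open Matrix Complex Finset

/-! A collective operator built from a diagonal one-site matrix is diagonal in the computational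
basis, with eigenvalue `∑ i, M (f i) (f i)` at `f`. For `D^(ℓ)` this is the number of sites
carrying `ℓ` minus the number carrying `ℓ + 1`, which on the support of `|S_u⟩` is
`u ℓ - u (ℓ + 1)`. -/

lemma site_mulVec_apply_of_isDiag {d N : ℕ} [NeZero d] {M : Matrix (ZMod d) (ZMod d) ℂ}
    (hM : M.IsDiag) (i : Fin N) (v : (Fin N → ZMod d) → ℂ) (f : Fin N → ZMod d) :
    (site d N M i *ᵥ v) f = M (f i) (f i) * v f := by
  rw [mulVec, dotProduct, Finset.sum_eq_single_of_mem f (mem_univ f)]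
  · simp [site]
  · intro g _ hgf
    by_cases hdiffer : ∃ j ≠ i, f j ≠ g j
    · obtain ⟨j, hji, hfg⟩ := hdiffer
      simp only [site, of_apply]
      rw [prod_eq_zero (mem_erase.mpr ⟨hji, mem_univ j⟩) (by simp [hfg]), mul_zero, zero_mul]
    · have hfi : f i ≠ g i := fun h ↦ hgf <| funext fun j ↦ by
        by_cases hj : j = i
        · exact hj ▸ h.symm
        · by_contra hne; exact hdiffer ⟨j, hj, Ne.symm hne⟩
      simp [site, hM hfi]

lemma coll_mulVec_apply_of_isDiag {d N : ℕ} [NeZero d] {M : Matrix (ZMod d) (ZMod d) ℂ}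
    (hM : M.IsDiag) (v : (Fin N → ZMod d) → ℂ) (f : Fin N → ZMod d) :
    (coll d N M *ᵥ v) f = (∑ i, M (f i) (f i)) * v f := by
  simp only [coll, sum_mulVec, Finset.sum_apply, site_mulVec_apply_of_isDiag hM, sum_mul]

lemma Dmat_isDiag (d : ℕ) (ℓ : ZMod d) : (Dmat d ℓ).IsDiag := by
  intro p q hpq
  simp only [Dmat, Matrix.sub_apply, single_apply]
  grind

lemma Dmat_apply_self (d : ℕ) (ℓ p : ZMod d) :
    Dmat d ℓ p p = (if p = ℓ then 1 else 0) - (if p = ℓ + 1 then 1 else 0) := by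
  simp [Dmat, single_apply, eq_comm]

lemma sum_Dmat_apply_self {d N : ℕ} (ℓ : ZMod d) (f : Fin N → ZMod d) :
    ∑ i, Dmat d ℓ (f i) (f i) =
      (#{i | f i = ℓ} : ℂ) - (#{i | f i = ℓ + 1} : ℂ) := by
  simp only [Dmat_apply_self, sum_sub_distrib, sum_boole]

theorem stmt6_general (d N : ℕ) [NeZero d]
    (u : ZMod d → ℤ) (ℓ : ZMod d) :
    coll d N (Dmat d ℓ) *ᵥ dicke d N u =
      ((u ℓ - u (ℓ + 1) : ℤ) : ℂ) • dicke d N u := by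
  funext f
  rw [coll_mulVec_apply_of_isDiag (Dmat_isDiag d ℓ), sum_Dmat_apply_self, Pi.smul_apply,
    smul_eq_mul, dicke]
  split_ifs with hcontent
  · rw [← hcontent ℓ, ← hcontent (ℓ + 1)]
    push_cast
    ring
  · simp

/-- Lemma S2, diagonal part. -/
theorem stmt6 (d N : ℕ) [NeZero d] (hd : 2 ≤ d) (hN : 1 ≤ N)
    (u : ZMod d → ℤ) (hu : admissible d N u) (ℓ : ZMod d) :
    coll d N (Dmat d ℓ) *ᵥ dicke d N u =
      ((u ℓ - u (ℓ + 1) : ℤ) : ℂ) • dicke d N u :=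
  stmt6_general d N u ℓ
end

section
/- Let k be an integer and let v be a ℂ-linear combination of Dicke vectors |S_u⟩ over admissible contents u whose weight Σ_{m=0}^{d−1} m·u_m is congruent to k modulo d. Then for every n ∈ ZMod d with n ≠ 0, ⟨v| S~^(0,n) |v⟩ = 0. -/
open Matrix Complex Finset

/-!
A configuration f lies in the support of the Dicke vector of its own content, and the weight of
that content is ∑ᵢ f i modulo d. Hence every configuration in the support of v has the same sum
k in ZMod d. A single-site operator changes only one letter of f, so if it preserves ∑ᵢ f i it
preserves that letter too; the matrix S^(0,n) with n ≠ 0 has zero diagonal, so S~^(0,n) has zero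
matrix entries between any two configurations of the support of v.
-/

noncomputable def cont (d N : ℕ) (f : Fin N → ZMod d) : ZMod d → ℤ :=
  fun k => ((univ.filter fun i => f i = k).card : ℤ)

lemma dicke_apply (d N : ℕ) [NeZero d] (u : ZMod d → ℤ) (f : Fin N → ZMod d) :
    dicke d N u f = if cont d N f = u then 1 else 0 := by
  simp only [dicke, cont, funext_iff]

lemma cont_mem_support_of_ne_zero (d N : ℕ) [NeZero d] (β : (ZMod d → ℤ) →₀ ℂ)
    (f : Fin N → ZMod d) (hf : (β.sum fun u c => c • dicke d N u) f ≠ 0) :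
    cont d N f ∈ β.support := by
  contrapose! hf
  simp only [Finsupp.sum, Finset.sum_apply, Pi.smul_apply, smul_eq_mul, dicke_apply]
  refine Finset.sum_eq_zero fun u hu => ?_
  rw [if_neg (by rintro rfl; exact hf hu), mul_zero]

lemma cweight_cont (d N : ℕ) [NeZero d] (f : Fin N → ZMod d) :
    cweight d (cont d N f) = ∑ i, ((f i).val : ℤ) := by
  rw [← Finset.sum_fiberwise_of_maps_to (g := fun i => (f i).val) (t := range d)
    (fun i _ => mem_range.mpr (ZMod.val_lt _))]
  refine Finset.sum_congr rfl fun m hm => ?_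
  have hfiber : (univ.filter fun i => f i = (m : ZMod d)) = univ.filter fun i => (f i).val = m :=
    Finset.filter_congr fun i _ =>
      ⟨fun h => h ▸ ZMod.val_cast_of_lt (mem_range.mp hm),
        fun h => by rw [← h, ZMod.natCast_val, ZMod.cast_id]⟩
  rw [cont, hfiber, Finset.sum_congr rfl fun i hi => by rw [(mem_filter.mp hi).2],
    Finset.sum_const, nsmul_eq_mul, mul_comm]

lemma cweight_cont_cast (d N : ℕ) [NeZero d] (f : Fin N → ZMod d) :
    ((cweight d (cont d N f) : ℤ) : ZMod d) = ∑ i, f i := by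
  simp [cweight_cont]

lemma apply_eq_of_sum_eq_of_eqOn_compl {ι G : Type*} [Fintype ι] [DecidableEq ι]
    [AddCommGroup G] {f g : ι → G} (i : ι) (hfg : ∀ j, j ≠ i → f j = g j)
    (hsum : ∑ j, f j = ∑ j, g j) : f i = g i := by
  rwa [← add_sum_erase _ _ (mem_univ i), ← add_sum_erase _ _ (mem_univ i),
    Finset.sum_congr rfl fun j hj => hfg j (ne_of_mem_erase hj), add_left_inj] at hsum

lemma site_apply_ne_zero (d N : ℕ) [NeZero d] {M : Matrix (ZMod d) (ZMod d) ℂ} {i : Fin N}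
    {f g : Fin N → ZMod d} (h : site d N M i f g ≠ 0) :
    M (f i) (g i) ≠ 0 ∧ ∀ j, j ≠ i → f j = g j := by
  simp only [site, of_apply, ne_eq, mul_eq_zero, not_or, prod_eq_zero_iff, mem_erase,
    mem_univ, and_true, ite_eq_right_iff, one_ne_zero, imp_false, not_exists, not_and,
    not_not] at h
  exact h

lemma coll_apply_eq_zero_of_sum_eq (d N : ℕ) [NeZero d] {M : Matrix (ZMod d) (ZMod d) ℂ}
    (hM : ∀ p, M p p = 0) {f g : Fin N → ZMod d} (hsum : ∑ i, f i = ∑ i, g i) :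
    coll d N M f g = 0 := by
  rw [coll, Matrix.sum_apply]
  refine Finset.sum_eq_zero fun i _ => ?_
  by_contra h
  obtain ⟨hMfg, hfg⟩ := site_apply_ne_zero d N h
  exact hMfg (apply_eq_of_sum_eq_of_eqOn_compl i hfg hsum ▸ hM _)

lemma Smat_apply_self (d : ℕ) {j k : ZMod d} (hjk : j ≠ k) (p : ZMod d) :
    Smat d j k p p = 0 := by
  simp only [Smat, Matrix.add_apply, single_apply]
  split_ifs <;> simp_all

lemma qinner_mulVec_eq_zero (d N : ℕ) [NeZero d]
    {A : Matrix (Fin N → ZMod d) (Fin N → ZMod d) ℂ} {v : (Fin N → ZMod d) → ℂ}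
    (hA : ∀ f g, v f ≠ 0 → v g ≠ 0 → A f g = 0) :
    qinner d N v (A *ᵥ v) = 0 := by
  refine Finset.sum_eq_zero fun f _ => ?_
  rcases eq_or_ne (v f) 0 with hf | hf
  · simp [hf]
  refine mul_eq_zero_of_right _ (Finset.sum_eq_zero fun g _ => ?_)
  rcases eq_or_ne (v g) 0 with hg | hg
  · simp [hg]
  · simp [hA f g hf hg]

theorem stmt11_general (d N : ℕ) [NeZero d]
    (k : ℤ) (β : (ZMod d → ℤ) →₀ ℂ)
    (hβ : ∀ u ∈ β.support, admissible d N u ∧ cweight d u ≡ k [ZMOD (d : ℤ)])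
    (v : (Fin N → ZMod d) → ℂ) (hv : v = β.sum fun u c => c • dicke d N u)
    (n : ZMod d) (hn : n ≠ 0) :
    qinner d N v (coll d N (Smat d 0 n) *ᵥ v) = 0 := by
  have hsum : ∀ f, v f ≠ 0 → ∑ i, f i = k := fun f hf => by
    have hw := (hβ _ (cont_mem_support_of_ne_zero d N β f (hv ▸ hf))).2
    rw [← cweight_cont_cast, (ZMod.intCast_eq_intCast_iff _ _ d).mpr hw]
  exact qinner_mulVec_eq_zero d N fun f g hf hg =>
    coll_apply_eq_zero_of_sum_eq d N (Smat_apply_self d hn.symm)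
      ((hsum f hf).trans (hsum g hg).symm)

theorem stmt11 (d N : ℕ) [NeZero d] (hd : 2 ≤ d) (hN : 1 ≤ N)
    (k : ℤ) (β : (ZMod d → ℤ) →₀ ℂ)
    (hβ : ∀ u ∈ β.support, admissible d N u ∧ cweight d u ≡ k [ZMOD (d : ℤ)])
    (v : (Fin N → ZMod d) → ℂ) (hv : v = β.sum fun u c => c • dicke d N u)
    (n : ZMod d) (hn : n ≠ 0) :
    qinner d N v (coll d N (Smat d 0 n) *ᵥ v) = 0 :=
  stmt11_general d N k β hβ v hv n hn
end

section
/- (Theorem 5.) Let d ≥ 3 be odd and N ≥ 1. Let (|k̄⟩)_{k∈ZMod d} be N-qudit vectors such that: (i) ⟨ī|j̄⟩ equals 1 if i = j and 0 otherwise; (ii) |k̄⟩ = X̄^k |0̄⟩ for every k; (iii) each |k̄⟩ is a ℂ-linear combination of Dicke vectors |S_u⟩ over admissible contents u whose weight Σ_{m=0}^{d−1} m·u_m is congruent to k modulo d; (iv) for every ℓ, j ∈ ZMod d, the vector D~^(ℓ)|j̄⟩ lies in the ℂ-span of {|k̄⟩ : k ∈ ZMod d}. Assume: (C1) ⟨ī|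 S~^(0,n) |j̄⟩ = 0 for all i ≠ j in ZMod d and all natural numbers n with 1 ≤ n ≤ (d−1)/2 (n read in ZMod d); (C2) for every Γ, Υ ∈ {S~, A~} and all natural numbers 0 ≤ p < q ≤ d−1 and 0 ≤ r < s ≤ d−1 (indices read in ZMod d) there is a constant c ∈ ℂ with ⟨ī| Γ^(p,q) Υ^(r,s) |j̄⟩ = c if i = j and 0 if i ≠ j, for all i, j; (C3) ⟨k̄| D~^(d−2) |k̄⟩ takes the same value for all k ∈ ZMod d; (C4) for every natural number 0 ≤ ℓ ≤ d−2, ⟨k̄| D~^(ℓ) D~^(d−2) |k̄⟩ takes the same value for all k ∈ ZMod d. Let E be the set of collective operators {S~^(p,q), A~^(p,q) : 0 ≤ p < q ≤ d−1} ∪ {D~^(ℓ) : 0 ≤ ℓ ≤ d−2}. Then for all E, F ∈ E there exist constants c_E, c_{E,F} ∈ ℂ such that ⟨ī| E |j̄⟩ = c_E·δ_{ij} and ⟨ī| E F |j̄⟩ = c_{E,F}·δ_{ij} for all i, j ∈ ZMod d. -/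
open Matrix Complex Finset

/-!
The codewords are graded by the total weight `∑ i, f i ∈ ZMod d`: by (iii) `|k̄⟩` lives on
configurations of weight `k`, a collective one-site transition `|a⟩⟨b|` raises the weight by
`a - b`, and diagonal operators preserve it. By (ii), shifting every site by `t` turns
`|a⟩⟨b|` into `|a+t⟩⟨b+t|` and `|k̄⟩` into `|k+t⟩`, leaving matrix elements unchanged.

For `a ≠ b`, `⟨ī|(|a⟩⟨b|)~|j̄⟩` can only be nonzero when `i = j + a - b ≠ j`. As `d` is odd,
the reverse transition `|b⟩⟨a|` cannot connect the same codewords, so this element equals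
`⟨ī|S~^(a,b)|j̄⟩`, which a shift turns into an element of `S~^(0, ±(b - a))` killed by (C1).
Hence all matrix elements of `S~` and `A~` vanish. The `D~^(ℓ)` are real, diagonal and commute;
a shift moves their diagonal elements (and those of their products) onto the ones fixed by
(C3) and (C4). Products of `D~` with `S~` or `A~` vanish because `D~` maps the code into
itself (iv).
-/

namespace DickeCode

variable {d N : ℕ}

def weight (f : Fin N → ZMod d) : ZMod d := ∑ i, f i

def weightSpace (d N : ℕ) (k : ZMod d) : Submodule ℂ ((Fin N → ZMod d) → ℂ) where
  carrier := {v | ∀ f, weight f ≠ k → v f = 0}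
  add_mem' hv hw f hf := by simp [hv f hf, hw f hf]
  zero_mem' _ _ := rfl
  smul_mem' c v hv f hf := by simp [hv f hf]

def siteShift (t : ZMod d) : (Fin N → ZMod d) ≃ (Fin N → ZMod d) :=
  Equiv.piCongrRight fun _ => Equiv.subRight t

lemma siteShift_apply (t : ZMod d) (f : Fin N → ZMod d) (i : Fin N) :
    siteShift t f i = f i - t := rfl

lemma Smat_comm (a b : ZMod d) : Smat d a b = Smat d b a := add_comm _ _

lemma Smat_submatrix_subRight (a b t : ZMod d) :
    (Smat d a b).submatrix (Equiv.subRight t) (Equiv.subRight t) = Smat d (a + t) (b + t) := by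
  simp [Smat, submatrix_add]

lemma Dmat_submatrix_subRight (ℓ t : ZMod d) :
    (Dmat d ℓ).submatrix (Equiv.subRight t) (Equiv.subRight t) = Dmat d (ℓ + t) := by
  simp [Dmat, submatrix_sub, add_right_comm]

lemma Dmat_eq_diagonal (ℓ : ZMod d) :
    Dmat d ℓ = diagonal (Pi.single ℓ 1 - Pi.single (ℓ + 1) 1) := by
  rw [Dmat, ← diagonal_single, ← diagonal_single, diagonal_sub]
  rfl

variable [NeZero d]

lemma val_le_half_or_neg_val_le_half (hodd : Odd d) {δ : ZMod d} (hδ : δ ≠ 0) :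
    δ.val ≤ (d - 1) / 2 ∨ (-δ).val ≤ (d - 1) / 2 := by
  rw [ZMod.neg_val, if_neg hδ]
  have := ZMod.val_lt δ
  obtain ⟨m, rfl⟩ := hodd
  omega

lemma val_le_sub_two_of_ne {x : ZMod d} (hx : x ≠ ((d - 2 : ℕ) : ZMod d) + 1) :
    x.val ≤ d - 2 := by
  by_contra h
  have hval : x.val = (d - 2) + 1 := by have := ZMod.val_lt x; omega
  exact hx (by rw [← ZMod.natCast_zmod_val x, hval, Nat.cast_succ])

lemma weight_eq_sum_card_mul (f : Fin N → ZMod d) :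
    weight f = ∑ c : ZMod d, (#{i | f i = c} : ZMod d) * c := by
  rw [weight, ← Finset.sum_fiberwise univ f]
  refine Finset.sum_congr rfl fun c _ => ?_
  rw [Finset.sum_congr rfl fun i hi => (Finset.mem_filter.mp hi).2, sum_const, nsmul_eq_mul]

lemma intCast_cweight (u : ZMod d → ℤ) :
    ((cweight d u : ℤ) : ZMod d) = ∑ c : ZMod d, (u c : ZMod d) * c := by
  rw [cweight, Int.cast_sum]
  refine Finset.sum_nbij' (fun m => (m : ZMod d)) ZMod.val (by simp) (by simp [ZMod.val_lt])
    (fun m hm => ZMod.val_cast_of_lt (Finset.mem_range.mp hm)) (by simp) (by simp [mul_comm])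

lemma dicke_mem_weightSpace (u : ZMod d → ℤ) :
    dicke d N u ∈ weightSpace d N (cweight d u) := by
  intro f hf
  rw [dicke, if_neg]
  refine fun hcount => hf ?_
  rw [weight_eq_sum_card_mul, intCast_cweight]
  refine Finset.sum_congr rfl fun c _ => ?_
  rw [← hcount c, Int.cast_natCast]

lemma mem_weightSpace_of_mem_span_dicke {k : ZMod d} {v : (Fin N → ZMod d) → ℂ}
    (hv : v ∈ Submodule.span ℂ {w : (Fin N → ZMod d) → ℂ | ∃ u : ZMod d → ℤ,
      admissible d N u ∧ cweight d u ≡ (k.val : ℤ) [ZMOD (d : ℤ)] ∧ w = dicke d N u}) :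
    v ∈ weightSpace d N k := by
  refine Submodule.span_le.mpr ?_ hv
  rintro _ ⟨u, -, hu, rfl⟩
  have := dicke_mem_weightSpace (N := N) u
  rwa [(ZMod.intCast_eq_intCast_iff _ _ _).mpr hu, Int.cast_natCast, ZMod.natCast_zmod_val] at this

lemma qinner_eq_zero_of_mem_weightSpace {k k' : ZMod d} (hkk' : k ≠ k')
    {v w : (Fin N → ZMod d) → ℂ} (hv : v ∈ weightSpace d N k) (hw : w ∈ weightSpace d N k') :
    qinner d N v w = 0 := by
  refine Finset.sum_eq_zero fun f _ => ?_
  by_cases hf : weight f = k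
  · rw [hw f (hf ▸ hkk'), mul_zero]
  · rw [hv f hf, star_zero, zero_mul]

lemma coll_single_apply_eq_zero (a b : ZMod d) (c : ℂ) {f g : Fin N → ZMod d}
    (h : weight f ≠ weight g + a - b) : coll d N (single a b c) f g = 0 := by
  rw [coll, Matrix.sum_apply]
  refine Finset.sum_eq_zero fun s _ => ?_
  simp only [site, of_apply, single_apply]
  by_contra hne
  obtain ⟨⟨⟨rfl, rfl⟩, -⟩, hoff⟩ := (mul_ne_zero_iff.mp hne).imp_left (ite_ne_right_iff.mp)
  have hagree : ∀ j ∈ univ.erase s, f j = g j := fun j hj => by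
    by_contra hj'
    exact hoff (Finset.prod_eq_zero hj (if_neg hj'))
  apply h
  rw [weight, weight, ← add_sum_erase _ _ (mem_univ s), ← add_sum_erase _ _ (mem_univ s),
    Finset.sum_congr rfl hagree]
  ring

lemma coll_single_mulVec_mem {k : ZMod d} {v : (Fin N → ZMod d) → ℂ}
    (hv : v ∈ weightSpace d N k) (a b : ZMod d) (c : ℂ) :
    coll d N (single a b c) *ᵥ v ∈ weightSpace d N (k + a - b) := by
  intro f hf
  change ∑ g, coll d N (single a b c) f g * v g = 0
  refine Finset.sum_eq_zero fun g _ => ?_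
  by_cases hg : weight g = k
  · rw [coll_single_apply_eq_zero a b c (hg ▸ hf), zero_mul]
  · rw [hv g hg, mul_zero]

lemma diagonal_mulVec_mem {k : ZMod d} {v : (Fin N → ZMod d) → ℂ}
    (hv : v ∈ weightSpace d N k) (y : (Fin N → ZMod d) → ℂ) :
    diagonal y *ᵥ v ∈ weightSpace d N k := by
  intro f hf
  rw [mulVec_diagonal, hv f hf, mul_zero]

lemma qinner_eq_dotProduct (v w : (Fin N → ZMod d) → ℂ) : qinner d N v w = star v ⬝ᵥ w := rfl

lemma qinner_add_right (v w w' : (Fin N → ZMod d) → ℂ) :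
    qinner d N v (w + w') = qinner d N v w + qinner d N v w' :=
  dotProduct_add _ _ _

lemma qinner_smul_right (c : ℂ) (v w : (Fin N → ZMod d) → ℂ) :
    qinner d N v (c • w) = c • qinner d N v w :=
  dotProduct_smul _ _ _

lemma star_qinner (v w : (Fin N → ZMod d) → ℂ) : star (qinner d N v w) = qinner d N w v := by
  rw [qinner_eq_dotProduct, star_dotProduct, star_star, qinner_eq_dotProduct]

lemma qinner_mulVec (A : Matrix (Fin N → ZMod d) (Fin N → ZMod d) ℂ)
    (v w : (Fin N → ZMod d) → ℂ) : qinner d N v (A *ᵥ w) = qinner d N (Aᴴ *ᵥ v) w := by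
  rw [qinner_eq_dotProduct, qinner_eq_dotProduct, star_mulVec, conjTranspose_conjTranspose,
    dotProduct_mulVec]

lemma qinner_comp_equiv (e : (Fin N → ZMod d) ≃ (Fin N → ZMod d))
    (v w : (Fin N → ZMod d) → ℂ) : qinner d N (v ∘ e) (w ∘ e) = qinner d N v w :=
  e.sum_comp fun f => star (v f) * w f

lemma qinner_submatrix_mulVec (e : (Fin N → ZMod d) ≃ (Fin N → ZMod d))
    (A : Matrix (Fin N → ZMod d) (Fin N → ZMod d) ℂ) (v w : (Fin N → ZMod d) → ℂ) :
    qinner d N (v ∘ e) (A.submatrix e e *ᵥ (w ∘ e)) = qinner d N v (A *ᵥ w) := by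
  rw [submatrix_mulVec_equiv, Function.comp_assoc, e.self_comp_symm, Function.comp_id,
    qinner_comp_equiv]

lemma coll_add (M M' : Matrix (ZMod d) (ZMod d) ℂ) :
    coll d N (M + M') = coll d N M + coll d N M' := by
  ext f g
  simp [coll, site, Matrix.sum_apply, add_mul, Finset.sum_add_distrib]

lemma coll_smul (c : ℂ) (M : Matrix (ZMod d) (ZMod d) ℂ) :
    coll d N (c • M) = c • coll d N M := by
  ext f g
  simp [coll, site, Matrix.sum_apply, Finset.mul_sum, mul_assoc]

lemma coll_submatrix (M : Matrix (ZMod d) (ZMod d) ℂ) (e : ZMod d ≃ ZMod d) :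
    coll d N (M.submatrix e e) =
      (coll d N M).submatrix (Equiv.piCongrRight fun _ => e) (Equiv.piCongrRight fun _ => e) := by
  ext f g
  simp [coll, site, Matrix.sum_apply]

lemma coll_diagonal (x : ZMod d → ℂ) :
    coll d N (diagonal x) = diagonal fun f => ∑ s, x (f s) := by
  ext f g
  rw [coll, Matrix.sum_apply, diagonal_apply]
  split_ifs with hfg
  · subst hfg
    simp [site]
  · obtain ⟨j, hj⟩ := Function.ne_iff.mp hfg
    refine Finset.sum_eq_zero fun s _ => ?_
    rcases eq_or_ne s j with rfl | hsj
    · simp [site, diagonal_apply_ne _ hj]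
    · simp only [site, of_apply]
      rw [Finset.prod_eq_zero (Finset.mem_erase.mpr ⟨hsj.symm, mem_univ j⟩) (if_neg hj), mul_zero]

lemma coll_Dmat_conjTranspose (ℓ : ZMod d) :
    (coll d N (Dmat d ℓ))ᴴ = coll d N (Dmat d ℓ) := by
  have hreal : star (Pi.single ℓ 1 - Pi.single (ℓ + 1) 1 : ZMod d → ℂ) =
      Pi.single ℓ 1 - Pi.single (ℓ + 1) 1 := by
    rw [star_sub, Pi.star_single, Pi.star_single, star_one]
  rw [Dmat_eq_diagonal, coll_diagonal, diagonal_conjTranspose]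
  congr 1
  ext f
  simp only [Pi.star_apply, star_sum]
  exact Finset.sum_congr rfl fun s _ => congrFun hreal (f s)

lemma coll_Dmat_mul_comm (a b : ZMod d) :
    coll d N (Dmat d a) * coll d N (Dmat d b) = coll d N (Dmat d b) * coll d N (Dmat d a) := by
  rw [Dmat_eq_diagonal, Dmat_eq_diagonal, coll_diagonal, coll_diagonal, diagonal_mul_diagonal,
    diagonal_mul_diagonal]
  simp only [mul_comm]

lemma coll_Dmat_mulVec_mem {k : ZMod d} {v : (Fin N → ZMod d) → ℂ}
    (hv : v ∈ weightSpace d N k) (ℓ : ZMod d) : coll d N (Dmat d ℓ) *ᵥ v ∈ weightSpace d N k := by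
  rw [Dmat_eq_diagonal, coll_diagonal]
  exact diagonal_mulVec_mem hv _

lemma shiftX_apply (a b : ZMod d) : shiftX d a b = if a = b + 1 then 1 else 0 := by
  rw [shiftX, Matrix.sum_apply,
    Finset.sum_eq_single b (fun p _ hp => single_apply_of_col_ne _ _ hp _) (by simp)]
  simp [single_apply, eq_comm]

lemma tpow_shiftX_mulVec (v : (Fin N → ZMod d) → ℂ) :
    tpow d N (shiftX d) *ᵥ v = v ∘ siteShift 1 := by
  ext f
  have hrow : ∀ g, tpow d N (shiftX d) f g = if g = siteShift 1 f then 1 else 0 := fun g => by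
    simp only [tpow, of_apply, shiftX_apply, Fintype.prod_boole, funext_iff, siteShift_apply,
      eq_sub_iff_add_eq, eq_comm]
    congr
  simp [mulVec, dotProduct, hrow]

lemma tpow_shiftX_pow_mulVec (m : ℕ) (v : (Fin N → ZMod d) → ℂ) :
    tpow d N (shiftX d) ^ m *ᵥ v = v ∘ siteShift m := by
  induction m with
  | zero =>
    ext f
    simp only [pow_zero, one_mulVec, Nat.cast_zero, Function.comp_apply]
    congr 1
    ext i
    simp [siteShift_apply]
  | succ m ih =>
    ext f
    rw [pow_succ', ← mulVec_mulVec, ih, tpow_shiftX_mulVec]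
    simp only [Function.comp_apply]
    congr 1
    ext i
    simp only [siteShift_apply]
    push_cast
    ring

variable {bar : ZMod d → (Fin N → ZMod d) → ℂ}

lemma codeword_shift
    (hX : ∀ k : ZMod d, bar k = (tpow d N (shiftX d)) ^ k.val *ᵥ bar 0) (k t : ZMod d) :
    bar (k + t) = bar k ∘ siteShift t := by
  ext f
  simp only [hX k, hX (k + t), tpow_shiftX_pow_mulVec, Function.comp_apply, ZMod.natCast_val,
    ZMod.cast_id', id]
  congr 1
  ext i
  simp only [siteShift_apply]
  ring

def KnillLaflamme (bar : ZMod d → (Fin N → ZMod d) → ℂ)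
    (A : Matrix (Fin N → ZMod d) (Fin N → ZMod d) ℂ) : Prop :=
  ∃ c : ℂ, ∀ i j, qinner d N (bar i) (A *ᵥ bar j) = if i = j then c else 0

lemma knillLaflamme_of_forall_eq_zero {A : Matrix (Fin N → ZMod d) (Fin N → ZMod d) ℂ}
    (h : ∀ i j, qinner d N (bar i) (A *ᵥ bar j) = 0) : KnillLaflamme bar A :=
  ⟨0, fun i j => by rw [h, ite_self]⟩

lemma knillLaflamme_of_mulVec_mem_weightSpace (hweight : ∀ k, bar k ∈ weightSpace d N k)
    {A : Matrix (Fin N → ZMod d) (Fin N → ZMod d) ℂ}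
    (hA : ∀ k, ∀ v ∈ weightSpace d N k, A *ᵥ v ∈ weightSpace d N k)
    (hconst : ∀ k, qinner d N (bar k) (A *ᵥ bar k) = qinner d N (bar 0) (A *ᵥ bar 0)) :
    KnillLaflamme bar A := by
  refine ⟨qinner d N (bar 0) (A *ᵥ bar 0), fun i j => ?_⟩
  split_ifs with hij
  · exact hij ▸ hconst i
  · exact qinner_eq_zero_of_mem_weightSpace hij (hweight i) (hA j _ (hweight j))

lemma qinner_eq_zero_of_mem_span {v w : (Fin N → ZMod d) → ℂ}
    (hv : ∀ k, qinner d N v (bar k) = 0) (hw : w ∈ Submodule.span ℂ (Set.range bar)) :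
    qinner d N v w = 0 := by
  induction hw using Submodule.span_induction with
  | mem _ hx => obtain ⟨k, rfl⟩ := hx; exact hv k
  | zero => simp [qinner_eq_dotProduct]
  | add x y _ _ hx hy => rw [qinner_add_right, hx, hy, add_zero]
  | smul c x _ hx => rw [qinner_smul_right, hx, smul_zero]

lemma qinner_coll_shift (hshift : ∀ k t : ZMod d, bar (k + t) = bar k ∘ siteShift t)
    (M : Matrix (ZMod d) (ZMod d) ℂ) (t i j : ZMod d) :
    qinner d N (bar (i + t))
        (coll d N (M.submatrix (Equiv.subRight t) (Equiv.subRight t)) *ᵥ bar (j + t)) =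
      qinner d N (bar i) (coll d N M *ᵥ bar j) := by
  rw [hshift, hshift, coll_submatrix]
  exact qinner_submatrix_mulVec _ _ _ _

lemma qinner_coll_mul_coll_shift (hshift : ∀ k t : ZMod d, bar (k + t) = bar k ∘ siteShift t)
    (M M' : Matrix (ZMod d) (ZMod d) ℂ) (t i j : ZMod d) :
    qinner d N (bar (i + t))
        ((coll d N (M.submatrix (Equiv.subRight t) (Equiv.subRight t)) *
          coll d N (M'.submatrix (Equiv.subRight t) (Equiv.subRight t))) *ᵥ bar (j + t)) =
      qinner d N (bar i) ((coll d N M * coll d N M') *ᵥ bar j) := by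
  rw [hshift, hshift, coll_submatrix, coll_submatrix, submatrix_mul_equiv]
  exact qinner_submatrix_mulVec _ _ _ _

lemma qinner_coll_Smat_eq_zero_of_ne (hodd : Odd d)
    (hshift : ∀ k t : ZMod d, bar (k + t) = bar k ∘ siteShift t)
    (hC1 : ∀ i j : ZMod d, i ≠ j → ∀ n : ℕ, 1 ≤ n → n ≤ (d - 1) / 2 →
      qinner d N (bar i) (coll d N (Smat d 0 ((n : ℕ) : ZMod d)) *ᵥ bar j) = 0)
    {a b : ZMod d} (hab : a ≠ b) {i j : ZMod d} (hij : i ≠ j) :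
    qinner d N (bar i) (coll d N (Smat d a b) *ᵥ bar j) = 0 := by
  have hC1' : ∀ δ : ZMod d, δ ≠ 0 → δ.val ≤ (d - 1) / 2 → ∀ t : ZMod d,
      qinner d N (bar (i + t)) (coll d N (Smat d 0 δ) *ᵥ bar (j + t)) = 0 := fun δ hδ hle t => by
    simpa using hC1 _ _ (by simpa using hij) δ.val
      (Nat.one_le_iff_ne_zero.mpr ((ZMod.val_ne_zero δ).mpr hδ)) hle
  rcases val_le_half_or_neg_val_le_half hodd (sub_ne_zero.mpr hab.symm) with h | h
  · rw [← qinner_coll_shift hshift _ (-a), Smat_submatrix_subRight, add_neg_cancel,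
      ← sub_eq_add_neg b]
    exact hC1' _ (sub_ne_zero.mpr hab.symm) h _
  · rw [Smat_comm, ← qinner_coll_shift hshift _ (-b), Smat_submatrix_subRight, add_neg_cancel,
      ← sub_eq_add_neg a]
    exact hC1' _ (sub_ne_zero.mpr hab) (by rwa [neg_sub] at h) _

lemma qinner_coll_single_eq_zero (hodd : Odd d) (hweight : ∀ k, bar k ∈ weightSpace d N k)
    (hshift : ∀ k t : ZMod d, bar (k + t) = bar k ∘ siteShift t)
    (hC1 : ∀ i j : ZMod d, i ≠ j → ∀ n : ℕ, 1 ≤ n → n ≤ (d - 1) / 2 →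
      qinner d N (bar i) (coll d N (Smat d 0 ((n : ℕ) : ZMod d)) *ᵥ bar j) = 0)
    {a b : ZMod d} (hab : a ≠ b) (i j : ZMod d) :
    qinner d N (bar i) (coll d N (single a b 1) *ᵥ bar j) = 0 := by
  by_cases hi : i = j + a - b
  swap
  · exact qinner_eq_zero_of_mem_weightSpace hi (hweight i)
      (coll_single_mulVec_mem (hweight j) a b 1)
  -- `d` odd: the reverse transition `|b⟩⟨a|` leads to a different weight than `|a⟩⟨b|`
  have hrev : qinner d N (bar i) (coll d N (single b a 1) *ᵥ bar j) = 0 := by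
    refine qinner_eq_zero_of_mem_weightSpace (fun h => hab ?_) (hweight i)
      (coll_single_mulVec_mem (hweight j) b a 1)
    rw [← sub_eq_zero, ← ZMod.add_self_eq_zero_iff_eq_zero hodd]
    linear_combination h - hi
  have hS := qinner_coll_Smat_eq_zero_of_ne hodd hshift hC1 hab
    (i := i) (j := j) (fun h => hab (by linear_combination h - hi))
  rwa [Smat, coll_add, add_mulVec, qinner_add_right, hrev, add_zero] at hS

lemma qinner_coll_Smat_eq_zero (hodd : Odd d) (hweight : ∀ k, bar k ∈ weightSpace d N k)
    (hshift : ∀ k t : ZMod d, bar (k + t) = bar k ∘ siteShift t)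
    (hC1 : ∀ i j : ZMod d, i ≠ j → ∀ n : ℕ, 1 ≤ n → n ≤ (d - 1) / 2 →
      qinner d N (bar i) (coll d N (Smat d 0 ((n : ℕ) : ZMod d)) *ᵥ bar j) = 0)
    {a b : ZMod d} (hab : a ≠ b) (i j : ZMod d) :
    qinner d N (bar i) (coll d N (Smat d a b) *ᵥ bar j) = 0 := by
  rw [Smat, coll_add, add_mulVec, qinner_add_right,
    qinner_coll_single_eq_zero hodd hweight hshift hC1 hab,
    qinner_coll_single_eq_zero hodd hweight hshift hC1 hab.symm, add_zero]

lemma qinner_coll_Amat_eq_zero (hodd : Odd d) (hweight : ∀ k, bar k ∈ weightSpace d N k)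
    (hshift : ∀ k t : ZMod d, bar (k + t) = bar k ∘ siteShift t)
    (hC1 : ∀ i j : ZMod d, i ≠ j → ∀ n : ℕ, 1 ≤ n → n ≤ (d - 1) / 2 →
      qinner d N (bar i) (coll d N (Smat d 0 ((n : ℕ) : ZMod d)) *ᵥ bar j) = 0)
    {a b : ZMod d} (hab : a ≠ b) (i j : ZMod d) :
    qinner d N (bar i) (coll d N (Amat d a b) *ᵥ bar j) = 0 := by
  rw [Amat, coll_add, coll_smul, coll_smul, add_mulVec, smul_mulVec, smul_mulVec,
    qinner_add_right, qinner_smul_right, qinner_smul_right,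
    qinner_coll_single_eq_zero hodd hweight hshift hC1 hab,
    qinner_coll_single_eq_zero hodd hweight hshift hC1 hab.symm, smul_zero, smul_zero, add_zero]

lemma qinner_mul_coll_Dmat_eq_zero
    (hD : ∀ ℓ j : ZMod d, coll d N (Dmat d ℓ) *ᵥ bar j ∈ Submodule.span ℂ (Set.range bar))
    {A : Matrix (Fin N → ZMod d) (Fin N → ZMod d) ℂ}
    (hA : ∀ i j, qinner d N (bar i) (A *ᵥ bar j) = 0) (ℓ i j : ZMod d) :
    qinner d N (bar i) ((A * coll d N (Dmat d ℓ)) *ᵥ bar j) = 0 := by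
  rw [← mulVec_mulVec, qinner_mulVec]
  exact qinner_eq_zero_of_mem_span (fun k => by rw [← qinner_mulVec, hA]) (hD ℓ j)

lemma qinner_coll_Dmat_mul_eq_zero
    (hD : ∀ ℓ j : ZMod d, coll d N (Dmat d ℓ) *ᵥ bar j ∈ Submodule.span ℂ (Set.range bar))
    {A : Matrix (Fin N → ZMod d) (Fin N → ZMod d) ℂ}
    (hA : ∀ i j, qinner d N (bar i) (A *ᵥ bar j) = 0) (ℓ i j : ZMod d) :
    qinner d N (bar i) ((coll d N (Dmat d ℓ) * A) *ᵥ bar j) = 0 := by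
  rw [← mulVec_mulVec, qinner_mulVec, coll_Dmat_conjTranspose, ← star_qinner,
    qinner_eq_zero_of_mem_span (fun k => by rw [← star_qinner, hA, star_zero]) (hD ℓ i), star_zero]

lemma knillLaflamme_coll_Dmat (hweight : ∀ k, bar k ∈ weightSpace d N k)
    (hshift : ∀ k t : ZMod d, bar (k + t) = bar k ∘ siteShift t)
    (hC3 : ∀ k k' : ZMod d,
      qinner d N (bar k) (coll d N (Dmat d (((d - 2 : ℕ) : ZMod d))) *ᵥ bar k) =
      qinner d N (bar k') (coll d N (Dmat d (((d - 2 : ℕ) : ZMod d))) *ᵥ bar k'))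
    (ℓ : ZMod d) : KnillLaflamme bar (coll d N (Dmat d ℓ)) := by
  refine knillLaflamme_of_mulVec_mem_weightSpace hweight
    (fun _ _ hv => coll_Dmat_mulVec_mem hv ℓ) fun k => ?_
  have h := fun k => qinner_coll_shift hshift (Dmat d ℓ) (((d - 2 : ℕ) : ZMod d) - ℓ) k k
  simp only [Dmat_submatrix_subRight, add_sub_cancel] at h
  rw [← h, ← h]
  exact hC3 _ _

lemma knillLaflamme_coll_Dmat_mul_coll_Dmat (hd : 3 ≤ d) (hodd : Odd d)
    (hweight : ∀ k, bar k ∈ weightSpace d N k)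
    (hshift : ∀ k t : ZMod d, bar (k + t) = bar k ∘ siteShift t)
    (hC4 : ∀ ℓ : ℕ, ℓ ≤ d - 2 → ∀ k k' : ZMod d,
      qinner d N (bar k)
        ((coll d N (Dmat d ((ℓ : ℕ) : ZMod d)) *
          coll d N (Dmat d (((d - 2 : ℕ) : ZMod d)))) *ᵥ bar k) =
      qinner d N (bar k')
        ((coll d N (Dmat d ((ℓ : ℕ) : ZMod d)) *
          coll d N (Dmat d (((d - 2 : ℕ) : ZMod d)))) *ᵥ bar k'))
    (a b : ZMod d) : KnillLaflamme bar (coll d N (Dmat d a) * coll d N (Dmat d b)) := by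
  refine knillLaflamme_of_mulVec_mem_weightSpace hweight (fun _ _ hv => by
    rw [← mulVec_mulVec]; exact coll_Dmat_mulVec_mem (coll_Dmat_mulVec_mem hv b) a) fun k => ?_
  -- the two factors commute, and `a - b = 1 = b - a` is impossible for odd `d ≥ 3`
  wlog hab : a - b ≠ 1 generalizing a b
  · rw [coll_Dmat_mul_comm a b]
    refine this b a fun hba => ?_
    have : Fact (1 < d) := ⟨by omega⟩
    exact ZMod.ne_neg_self hodd one_ne_zero (by linear_combination -hba - not_not.mp hab)
  set m : ZMod d := ((d - 2 : ℕ) : ZMod d)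
  have h := fun k => qinner_coll_mul_coll_shift hshift (Dmat d a) (Dmat d b) (m - b) k k
  simp only [Dmat_submatrix_subRight, add_sub_cancel] at h
  have hval := val_le_sub_two_of_ne (x := a + (m - b)) fun hx => hab (by linear_combination hx)
  rw [← h, ← h]
  simpa using hC4 _ hval (k + (m - b)) (0 + (m - b))

end DickeCode

theorem stmt15_general (d N : ℕ) [NeZero d] (hd : 3 ≤ d) (hodd : Odd d)
    (bar : ZMod d → (Fin N → ZMod d) → ℂ)
    -- (ii) |k̄⟩ = X̄^k |0̄⟩
    (hX : ∀ k : ZMod d, bar k = (tpow d N (shiftX d)) ^ k.val *ᵥ bar 0)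
    -- (iii) |k̄⟩ is a combination of Dicke vectors of weight ≡ k (mod d)
    (hW : ∀ k : ZMod d, bar k ∈
      Submodule.span ℂ {w : (Fin N → ZMod d) → ℂ | ∃ u : ZMod d → ℤ,
        admissible d N u ∧ cweight d u ≡ (k.val : ℤ) [ZMOD (d : ℤ)] ∧ w = dicke d N u})
    -- (iv) D~^(ℓ)|j̄⟩ lies in the span of the codewords
    (hD : ∀ ℓ j : ZMod d,
      coll d N (Dmat d ℓ) *ᵥ bar j ∈ Submodule.span ℂ (Set.range bar))
    -- (C1)
    (hC1 : ∀ i j : ZMod d, i ≠ j → ∀ n : ℕ, 1 ≤ n → n ≤ (d - 1) / 2 →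
      qinner d N (bar i) (coll d N (Smat d 0 ((n : ℕ) : ZMod d)) *ᵥ bar j) = 0)
    -- (C2)
    (hC2 : ∀ p q r s : ℕ, p < q → q ≤ d - 1 → r < s → s ≤ d - 1 →
      ∀ Γ Υ : Matrix (ZMod d) (ZMod d) ℂ,
        (Γ = Smat d ((p : ℕ) : ZMod d) ((q : ℕ) : ZMod d) ∨
         Γ = Amat d ((p : ℕ) : ZMod d) ((q : ℕ) : ZMod d)) →
        (Υ = Smat d ((r : ℕ) : ZMod d) ((s : ℕ) : ZMod d) ∨
         Υ = Amat d ((r : ℕ) : ZMod d) ((s : ℕ) : ZMod d)) →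
        ∃ c : ℂ, ∀ i j : ZMod d,
          qinner d N (bar i) ((coll d N Γ * coll d N Υ) *ᵥ bar j) =
            if i = j then c else 0)
    -- (C3)
    (hC3 : ∀ k k' : ZMod d,
      qinner d N (bar k) (coll d N (Dmat d (((d - 2 : ℕ) : ZMod d))) *ᵥ bar k) =
      qinner d N (bar k') (coll d N (Dmat d (((d - 2 : ℕ) : ZMod d))) *ᵥ bar k'))
    -- (C4)
    (hC4 : ∀ ℓ : ℕ, ℓ ≤ d - 2 → ∀ k k' : ZMod d,
      qinner d N (bar k)
        ((coll d N (Dmat d ((ℓ : ℕ) : ZMod d)) *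
          coll d N (Dmat d (((d - 2 : ℕ) : ZMod d)))) *ᵥ bar k) =
      qinner d N (bar k')
        ((coll d N (Dmat d ((ℓ : ℕ) : ZMod d)) *
          coll d N (Dmat d (((d - 2 : ℕ) : ZMod d)))) *ᵥ bar k')) :
    ∀ E F : Matrix (Fin N → ZMod d) (Fin N → ZMod d) ℂ,
      ((∃ p q : ℕ, p < q ∧ q ≤ d - 1 ∧
          (E = coll d N (Smat d ((p : ℕ) : ZMod d) ((q : ℕ) : ZMod d)) ∨
           E = coll d N (Amat d ((p : ℕ) : ZMod d) ((q : ℕ) : ZMod d)))) ∨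
        (∃ ℓ : ℕ, ℓ ≤ d - 2 ∧ E = coll d N (Dmat d ((ℓ : ℕ) : ZMod d)))) →
      ((∃ p q : ℕ, p < q ∧ q ≤ d - 1 ∧
          (F = coll d N (Smat d ((p : ℕ) : ZMod d) ((q : ℕ) : ZMod d)) ∨
           F = coll d N (Amat d ((p : ℕ) : ZMod d) ((q : ℕ) : ZMod d)))) ∨
        (∃ ℓ : ℕ, ℓ ≤ d - 2 ∧ F = coll d N (Dmat d ((ℓ : ℕ) : ZMod d)))) →
      (∃ cE : ℂ, ∀ i j : ZMod d,
          qinner d N (bar i) (E *ᵥ bar j) = if i = j then cE else 0) ∧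
      (∃ cEF : ℂ, ∀ i j : ZMod d,
          qinner d N (bar i) ((E * F) *ᵥ bar j) = if i = j then cEF else 0) := by
  open DickeCode in
  have hweight : ∀ k, bar k ∈ weightSpace d N k := fun k => mem_weightSpace_of_mem_span_dicke (hW k)
  have hshift := codeword_shift hX
  have hzero : ∀ {E}, (∃ p q : ℕ, p < q ∧ q ≤ d - 1 ∧
      (E = coll d N (Smat d ((p : ℕ) : ZMod d) ((q : ℕ) : ZMod d)) ∨
       E = coll d N (Amat d ((p : ℕ) : ZMod d) ((q : ℕ) : ZMod d)))) →
      ∀ i j, qinner d N (bar i) (E *ᵥ bar j) = 0 := by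
    rintro _ ⟨p, q, hpq, hq, hE⟩ i j
    have hpq' : (p : ZMod d) ≠ q := fun h => by
      rw [ZMod.natCast_eq_natCast_iff', Nat.mod_eq_of_lt (by omega),
        Nat.mod_eq_of_lt (by omega)] at h
      omega
    rcases hE with rfl | rfl
    exacts [qinner_coll_Smat_eq_zero hodd hweight hshift hC1 hpq' i j,
      qinner_coll_Amat_eq_zero hodd hweight hshift hC1 hpq' i j]
  intro E F hE hF
  rcases hE with hE | ⟨ℓ, -, rfl⟩ <;> rcases hF with hF | ⟨ℓ', -, rfl⟩
  · refine ⟨knillLaflamme_of_forall_eq_zero (hzero hE), ?_⟩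
    obtain ⟨p, q, hpq, hq, hE⟩ := hE
    obtain ⟨r, s, hrs, hs, hF⟩ := hF
    rcases hE with rfl | rfl <;> rcases hF with rfl | rfl <;>
      exact hC2 p q r s hpq hq hrs hs _ _ (by simp) (by simp)
  · exact ⟨knillLaflamme_of_forall_eq_zero (hzero hE),
      knillLaflamme_of_forall_eq_zero (qinner_mul_coll_Dmat_eq_zero hD (hzero hE) _)⟩
  · exact ⟨knillLaflamme_coll_Dmat hweight hshift hC3 _,
      knillLaflamme_of_forall_eq_zero (qinner_coll_Dmat_mul_eq_zero hD (hzero hF) _)⟩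
  · exact ⟨knillLaflamme_coll_Dmat hweight hshift hC3 _,
      knillLaflamme_coll_Dmat_mul_coll_Dmat hd hodd hweight hshift hC4 _ _⟩

/-- Theorem 5. -/
theorem stmt15 (d N : ℕ) [NeZero d] (hd : 3 ≤ d) (hodd : Odd d) (hN : 1 ≤ N)
    (bar : ZMod d → (Fin N → ZMod d) → ℂ)
    -- (i) orthonormality
    (hON : ∀ i j : ZMod d, qinner d N (bar i) (bar j) = if i = j then 1 else 0)
    -- (ii) |k̄⟩ = X̄^k |0̄⟩
    (hX : ∀ k : ZMod d, bar k = (tpow d N (shiftX d)) ^ k.val *ᵥ bar 0)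
    -- (iii) |k̄⟩ is a combination of Dicke vectors of weight ≡ k (mod d)
    (hW : ∀ k : ZMod d, bar k ∈
      Submodule.span ℂ {w : (Fin N → ZMod d) → ℂ | ∃ u : ZMod d → ℤ,
        admissible d N u ∧ cweight d u ≡ (k.val : ℤ) [ZMOD (d : ℤ)] ∧ w = dicke d N u})
    -- (iv) D~^(ℓ)|j̄⟩ lies in the span of the codewords
    (hD : ∀ ℓ j : ZMod d,
      coll d N (Dmat d ℓ) *ᵥ bar j ∈ Submodule.span ℂ (Set.range bar))
    -- (C1)
    (hC1 : ∀ i j : ZMod d, i ≠ j → ∀ n : ℕ, 1 ≤ n → n ≤ (d - 1) / 2 →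
      qinner d N (bar i) (coll d N (Smat d 0 ((n : ℕ) : ZMod d)) *ᵥ bar j) = 0)
    -- (C2)
    (hC2 : ∀ p q r s : ℕ, p < q → q ≤ d - 1 → r < s → s ≤ d - 1 →
      ∀ Γ Υ : Matrix (ZMod d) (ZMod d) ℂ,
        (Γ = Smat d ((p : ℕ) : ZMod d) ((q : ℕ) : ZMod d) ∨
         Γ = Amat d ((p : ℕ) : ZMod d) ((q : ℕ) : ZMod d)) →
        (Υ = Smat d ((r : ℕ) : ZMod d) ((s : ℕ) : ZMod d) ∨
         Υ = Amat d ((r : ℕ) : ZMod d) ((s : ℕ) : ZMod d)) →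
        ∃ c : ℂ, ∀ i j : ZMod d,
          qinner d N (bar i) ((coll d N Γ * coll d N Υ) *ᵥ bar j) =
            if i = j then c else 0)
    -- (C3)
    (hC3 : ∀ k k' : ZMod d,
      qinner d N (bar k) (coll d N (Dmat d (((d - 2 : ℕ) : ZMod d))) *ᵥ bar k) =
      qinner d N (bar k') (coll d N (Dmat d (((d - 2 : ℕ) : ZMod d))) *ᵥ bar k'))
    -- (C4)
    (hC4 : ∀ ℓ : ℕ, ℓ ≤ d - 2 → ∀ k k' : ZMod d,
      qinner d N (bar k)
        ((coll d N (Dmat d ((ℓ : ℕ) : ZMod d)) *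
          coll d N (Dmat d (((d - 2 : ℕ) : ZMod d)))) *ᵥ bar k) =
      qinner d N (bar k')
        ((coll d N (Dmat d ((ℓ : ℕ) : ZMod d)) *
          coll d N (Dmat d (((d - 2 : ℕ) : ZMod d)))) *ᵥ bar k')) :
    ∀ E F : Matrix (Fin N → ZMod d) (Fin N → ZMod d) ℂ,
      ((∃ p q : ℕ, p < q ∧ q ≤ d - 1 ∧
          (E = coll d N (Smat d ((p : ℕ) : ZMod d) ((q : ℕ) : ZMod d)) ∨
           E = coll d N (Amat d ((p : ℕ) : ZMod d) ((q : ℕ) : ZMod d)))) ∨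
        (∃ ℓ : ℕ, ℓ ≤ d - 2 ∧ E = coll d N (Dmat d ((ℓ : ℕ) : ZMod d)))) →
      ((∃ p q : ℕ, p < q ∧ q ≤ d - 1 ∧
          (F = coll d N (Smat d ((p : ℕ) : ZMod d) ((q : ℕ) : ZMod d)) ∨
           F = coll d N (Amat d ((p : ℕ) : ZMod d) ((q : ℕ) : ZMod d)))) ∨
        (∃ ℓ : ℕ, ℓ ≤ d - 2 ∧ F = coll d N (Dmat d ((ℓ : ℕ) : ZMod d)))) →
      (∃ cE : ℂ, ∀ i j : ZMod d,
          qinner d N (bar i) (E *ᵥ bar j) = if i = j then cE else 0) ∧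
      (∃ cEF : ℂ, ∀ i j : ZMod d,
          qinner d N (bar i) ((E * F) *ᵥ bar j) = if i = j then cEF else 0) :=
  stmt15_general d N hd hodd bar hX hW hD hC1 hC2 hC3 hC4
end

section
/- (Theorem 6.) Suppose the code defined by α is sparse. Then: (a) for all i, j ∈ ZMod d and every n ∈ ZMod d with n ≠ 0, ⟨ī| S~^(0,n) |j̄⟩ = 0; and (b) for all i, j ∈ ZMod d, every Γ, Υ ∈ {S~, A~}, and all p ≠ q and r ≠ s in ZMod d with {p,q} ≠ {r,s} as sets, ⟨ī| Γ^(p,q) Υ^(r,s) |j̄⟩ = 0. -/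
open Matrix Complex Finset

/-!
The coefficient of `|ī⟩` at a basis state `f` is `α` evaluated at the content of `f` shifted
cyclically by `i`. A collective pair operator `S~^(p,q)` or `A~^(p,q)` moves one site between
levels `p` and `q`, so it changes the content by `±(e_p - e_q)`. Hence every nonzero term of the
matrix elements in question connects basis states whose contents differ by a nonzero vector of
ℓ¹-norm at most 4 (nonzero in (b) because `{p, q} ≠ {r, s}`), and sparseness forbids two such
states from both lying in the support of the codewords.
-/

namespace QuditCode

lemma ne_of_pair_eq_pair {α : Type*} {a b p q : α} (h : ({a, b} : Set α) = {p, q})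
    (hpq : p ≠ q) : a ≠ b := by
  rintro rfl
  rcases Set.pair_eq_pair_iff.mp h with ⟨rfl, rfl⟩ | ⟨rfl, rfl⟩ <;> exact hpq rfl

section Transfer

variable {ι : Type*}

lemma sum_abs_add_le [Fintype ι] (v w : ι → ℤ) :
    ∑ ξ, |(v + w) ξ| ≤ ∑ ξ, |v ξ| + ∑ ξ, |w ξ| := by
  rw [← Finset.sum_add_distrib]
  exact Finset.sum_le_sum fun ξ _ => abs_add_le _ _

variable [DecidableEq ι]

-- The change of content when one site moves from level `b` to level `a`.
def transfer (a b : ι) : ι → ℤ :=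
  Pi.single a 1 - Pi.single b 1

lemma transfer_ne_zero {a b : ι} (hab : a ≠ b) : transfer a b ≠ 0 := fun h => by
  simpa [transfer, hab] using congrFun h a

lemma eq_and_eq_of_transfer_add_transfer_eq_zero {a b c e : ι} (hab : a ≠ b)
    (h : transfer a b + transfer c e = 0) : a = e ∧ b = c := by
  have ha := congrFun h a
  have hb := congrFun h b
  simp only [transfer, Pi.add_apply, Pi.sub_apply, Pi.zero_apply, Pi.single_apply] at ha hb
  constructor <;> by_contra hne <;> split_ifs at ha hb <;> simp_all

variable [Fintype ι]

lemma sum_abs_transfer_le (a b : ι) : ∑ ξ, |transfer a b ξ| ≤ 2 := by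
  have hsingle (x : ι) : ∑ ξ, |(Pi.single x 1 : ι → ℤ) ξ| = 1 := by
    simp [Pi.single_apply, apply_ite]
  calc ∑ ξ, |transfer a b ξ|
      ≤ ∑ ξ, (|(Pi.single a 1 : ι → ℤ) ξ| + |(Pi.single b 1 : ι → ℤ) ξ|) :=
        Finset.sum_le_sum fun ξ _ => abs_sub _ _
    _ = 2 := by rw [Finset.sum_add_distrib, hsingle, hsingle]; norm_num

end Transfer

variable {d N : ℕ}

def content (f : Fin N → ZMod d) : ZMod d → ℤ :=
  fun k => #{i | f i = k}

lemma content_eq_sum_single (f : Fin N → ZMod d) :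
    content f = ∑ i, Pi.single (f i) 1 := by
  funext k
  simp only [content, Finset.card_filter, Finset.sum_apply, Pi.single_apply, eq_comm (a := k)]
  push_cast; rfl

lemma content_sub_const (f : Fin N → ZMod d) (c ξ : ZMod d) :
    content (fun i => f i - c) ξ = content f (ξ + c) := by
  simp only [content, sub_eq_iff_eq_add]

lemma content_sub_content_of_eqOn_compl {f g : Fin N → ZMod d} {i : Fin N}
    (h : ∀ j ≠ i, f j = g j) :
    content f - content g = transfer (f i) (g i) := by
  rw [content_eq_sum_single, content_eq_sum_single, ← Finset.sum_sub_distrib,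
    Finset.sum_eq_single i (fun j _ hj => by rw [h j hj, sub_self]) (by simp), transfer]

lemma pair_eq_of_apply_ne_zero {p q a b : ZMod d} {Γ : Matrix (ZMod d) (ZMod d) ℂ}
    (hΓ : Γ = Smat d p q ∨ Γ = Amat d p q) (h : Γ a b ≠ 0) :
    ({a, b} : Set (ZMod d)) = {p, q} := by
  by_contra hne
  rw [Set.pair_eq_pair_iff, not_or, not_and_or, not_and_or] at hne
  apply h
  rcases hΓ with rfl | rfl <;>
    simp only [Smat, Amat, Matrix.add_apply, Matrix.smul_apply, Matrix.single_apply,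
      smul_eq_mul] <;>
    grind

variable [NeZero d]

lemma shiftX_apply (a b : ZMod d) : shiftX d a b = if a = b + 1 then 1 else 0 := by
  simp only [shiftX, Matrix.sum_apply, Matrix.single_apply]
  rw [Finset.sum_eq_single b (fun p _ hp => if_neg fun h => hp h.2) (by simp)]
  simp [eq_comm]

lemma tpow_shiftX_mulVec (v : (Fin N → ZMod d) → ℂ) (f : Fin N → ZMod d) :
    (tpow d N (shiftX d) *ᵥ v) f = v (fun i => f i - 1) := by
  have hprod (g : Fin N → ZMod d) :
      (∏ i, shiftX d (f i) (g i)) = if (fun i => f i - 1) = g then 1 else 0 := by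
    simp only [shiftX_apply, Finset.prod_boole, funext_iff, Finset.mem_univ, true_implies,
      sub_eq_iff_eq_add]
  simp [Matrix.mulVec, dotProduct, tpow, hprod]

lemma tpow_shiftX_pow_mulVec (n : ℕ) (v : (Fin N → ZMod d) → ℂ) (f : Fin N → ZMod d) :
    (tpow d N (shiftX d) ^ n *ᵥ v) f = v (fun i => f i - n) := by
  induction n generalizing f with
  | zero => simp
  | succ m ih =>
    rw [pow_succ', ← Matrix.mulVec_mulVec, tpow_shiftX_mulVec, ih]
    congr 1; funext i; push_cast; ring

lemma dicke_apply (u : ZMod d → ℤ) (f : Fin N → ZMod d) :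
    dicke d N u f = if content f = u then 1 else 0 := by
  simp only [dicke, funext_iff, content]

lemma codeZero_apply (α : (ZMod d → ℤ) →₀ ℂ) (f : Fin N → ZMod d) :
    codeZero d N α f = α (content f) := by
  simp only [codeZero, Finsupp.sum, Finset.sum_apply, Pi.smul_apply, dicke_apply, smul_eq_mul,
    mul_ite, mul_one, mul_zero, eq_comm (a := content f), Finset.sum_ite_eq',
    Finsupp.mem_support_iff, ite_not, ite_eq_right_iff]
  exact fun h => h.symm

lemma codeword_apply (α : (ZMod d → ℤ) →₀ ℂ) (k : ZMod d) (f : Fin N → ZMod d) :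
    codeword d N α k f = α (fun ξ => content f (ξ + k)) := by
  simp only [codeword, tpow_shiftX_pow_mulVec, codeZero_apply, ZMod.natCast_val, ZMod.cast_id',
    id]
  exact congrArg α (funext (content_sub_const f k))

lemma exists_content_sub_eq_transfer {M : Matrix (ZMod d) (ZMod d) ℂ} {f g : Fin N → ZMod d}
    (h : coll d N M f g ≠ 0) : ∃ a b, M a b ≠ 0 ∧ content f - content g = transfer a b := by
  rw [coll, Matrix.sum_apply] at h
  obtain ⟨i, -, hi⟩ := Finset.exists_ne_zero_of_sum_ne_zero h
  rw [site, Matrix.of_apply] at hi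
  refine ⟨f i, g i, left_ne_zero_of_mul hi, content_sub_content_of_eqOn_compl fun j hj => ?_⟩
  by_contra hfg
  exact hi (mul_eq_zero_of_right _ (Finset.prod_eq_zero (Finset.mem_erase.mpr ⟨hj, mem_univ j⟩)
    (if_neg hfg)))

lemma content_eq_of_codeword_ne_zero {α : (ZMod d → ℤ) →₀ ℂ} (hsp : sparse d α)
    {i j : ZMod d} {f g : Fin N → ZMod d}
    (hf : codeword d N α i f ≠ 0) (hg : codeword d N α j g ≠ 0)
    (hle : ∑ ξ, |(content f - content g) ξ| ≤ 4) : content f = content g := by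
  rw [codeword_apply, ← Finsupp.mem_support_iff] at hf hg
  by_contra hne
  refine (hsp _ hf _ hg (i - j) fun h => hne ?_).not_ge ?_
  · obtain ⟨hfg, hij⟩ := Prod.mk.inj h
    funext ζ
    simpa [sub_eq_zero.mp hij] using congrFun hfg (ζ - i)
  · calc ∑ ξ, |content f (ξ + i) - content g (ξ + (i - j) + j)|
        = ∑ ξ, |(content f - content g) ξ| :=
          Fintype.sum_equiv (Equiv.addRight i) _ _ fun ξ => by
            rw [add_assoc, sub_add_cancel]; rfl
      _ ≤ 4 := hle

lemma qinner_codeword_mulVec_eq_zero {α : (ZMod d → ℤ) →₀ ℂ} (hsp : sparse d α)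
    (T : Matrix (Fin N → ZMod d) (Fin N → ZMod d) ℂ)
    (hT : ∀ f g, T f g ≠ 0 →
      content f ≠ content g ∧ ∑ ξ, |(content f - content g) ξ| ≤ 4)
    (i j : ZMod d) :
    qinner d N (codeword d N α i) (T *ᵥ codeword d N α j) = 0 := by
  refine Finset.sum_eq_zero fun f _ => ?_
  rw [Matrix.mulVec, dotProduct, Finset.mul_sum]
  refine Finset.sum_eq_zero fun g _ => ?_
  by_contra h
  obtain ⟨hf, hTg⟩ := mul_ne_zero_iff.mp h
  obtain ⟨hT0, hg⟩ := mul_ne_zero_iff.mp hTg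
  obtain ⟨hne, hle⟩ := hT f g hT0
  exact hne (content_eq_of_codeword_ne_zero hsp (star_ne_zero.mp hf) hg hle)

lemma content_change_of_coll_ne_zero {M : Matrix (ZMod d) (ZMod d) ℂ} {p q : ZMod d}
    (hM : ∀ a b, M a b ≠ 0 → ({a, b} : Set (ZMod d)) = {p, q}) (hpq : p ≠ q)
    {f g : Fin N → ZMod d} (h : coll d N M f g ≠ 0) :
    content f ≠ content g ∧ ∑ ξ, |(content f - content g) ξ| ≤ 4 := by
  obtain ⟨a, b, hab, hfg⟩ := exists_content_sub_eq_transfer h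
  rw [← sub_ne_zero, hfg]
  exact ⟨transfer_ne_zero (ne_of_pair_eq_pair (hM a b hab) hpq),
    (sum_abs_transfer_le a b).trans (by norm_num)⟩

lemma content_change_of_coll_mul_coll_ne_zero {M M' : Matrix (ZMod d) (ZMod d) ℂ}
    {p q r s : ZMod d} (hM : ∀ a b, M a b ≠ 0 → ({a, b} : Set (ZMod d)) = {p, q})
    (hM' : ∀ a b, M' a b ≠ 0 → ({a, b} : Set (ZMod d)) = {r, s}) (hpq : p ≠ q)
    (hne : ({p, q} : Set (ZMod d)) ≠ {r, s}) {f g : Fin N → ZMod d}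
    (h : (coll d N M * coll d N M') f g ≠ 0) :
    content f ≠ content g ∧ ∑ ξ, |(content f - content g) ξ| ≤ 4 := by
  rw [Matrix.mul_apply] at h
  obtain ⟨k, -, hk⟩ := Finset.exists_ne_zero_of_sum_ne_zero h
  obtain ⟨a, b, hab, hfk⟩ := exists_content_sub_eq_transfer (left_ne_zero_of_mul hk)
  obtain ⟨c, e, hce, hkg⟩ := exists_content_sub_eq_transfer (right_ne_zero_of_mul hk)
  have hfg : content f - content g = transfer a b + transfer c e := by
    rw [← hfk, ← hkg, sub_add_sub_cancel]
  rw [← sub_ne_zero, hfg]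
  refine ⟨fun h0 => hne ?_, ?_⟩
  · obtain ⟨rfl, rfl⟩ :=
      eq_and_eq_of_transfer_add_transfer_eq_zero (ne_of_pair_eq_pair (hM a b hab) hpq) h0
    rw [← hM a b hab, ← hM' b a hce, Set.pair_comm]
  · linarith [sum_abs_add_le (transfer a b) (transfer c e), sum_abs_transfer_le a b,
      sum_abs_transfer_le c e]

end QuditCode

open QuditCode

theorem stmt16_general (d N : ℕ) [NeZero d]
    (α : (ZMod d → ℤ) →₀ ℂ)
    (hsp : sparse d α) :
    (∀ i j : ZMod d, ∀ n : ZMod d, n ≠ 0 →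
      qinner d N (codeword d N α i) (coll d N (Smat d 0 n) *ᵥ codeword d N α j) = 0) ∧
    (∀ i j : ZMod d, ∀ p q r s : ZMod d, p ≠ q → r ≠ s →
      ({p, q} : Set (ZMod d)) ≠ ({r, s} : Set (ZMod d)) →
      ∀ Γ Υ : Matrix (ZMod d) (ZMod d) ℂ,
        (Γ = Smat d p q ∨ Γ = Amat d p q) →
        (Υ = Smat d r s ∨ Υ = Amat d r s) →
        qinner d N (codeword d N α i)
          ((coll d N Γ * coll d N Υ) *ᵥ codeword d N α j) = 0) := by
  refine ⟨fun i j n hn => ?_, fun i j p q r s hpq _ hne Γ Υ hΓ hΥ => ?_⟩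
  · exact qinner_codeword_mulVec_eq_zero hsp _
      (fun f g h => content_change_of_coll_ne_zero
        (fun a b => pair_eq_of_apply_ne_zero (Or.inl rfl)) hn.symm h) i j
  · exact qinner_codeword_mulVec_eq_zero hsp _
      (fun f g h => content_change_of_coll_mul_coll_ne_zero
        (fun a b => pair_eq_of_apply_ne_zero hΓ) (fun a b => pair_eq_of_apply_ne_zero hΥ)
        hpq hne h) i j

/-- Theorem 6. -/
theorem stmt16 (d N : ℕ) [NeZero d] (hd : 2 ≤ d) (hN : 1 ≤ N)
    (α : (ZMod d → ℤ) →₀ ℂ)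
    (hadm : ∀ u : ZMod d → ℤ, ¬ admissible d N u → α u = 0)
    (hsp : sparse d α) :
    (∀ i j : ZMod d, ∀ n : ZMod d, n ≠ 0 →
      qinner d N (codeword d N α i) (coll d N (Smat d 0 n) *ᵥ codeword d N α j) = 0) ∧
    (∀ i j : ZMod d, ∀ p q r s : ZMod d, p ≠ q → r ≠ s →
      ({p, q} : Set (ZMod d)) ≠ ({r, s} : Set (ZMod d)) →
      ∀ Γ Υ : Matrix (ZMod d) (ZMod d) ℂ,
        (Γ = Smat d p q ∨ Γ = Amat d p q) →
        (Υ = Smat d r s ∨ Υ = Amat d r s) →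
        qinner d N (codeword d N α i)
          ((coll d N Γ * coll d N Υ) *ᵥ codeword d N α j) = 0) :=
  stmt16_general d N α hsp
end
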